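/- Let v₁, v₂, v₃, v₄ be C^∞ vector fields on ℝ^N with [v_i,v_j] = 0 for all i,j ∈ {1,2,3,4}. Then both bivector fields v₁,C ∧ v₂,C + v₃,C ∧ v₄,V and v₁,C ∧ v₂,C + v₃,C ∧ v₄,C on ℝ^N × ℝ^N are Poisson tensors. -/

import Mathlib

open scoped BigOperators

/-- Partial derivative of `f : ℝ^N → ℝ` in the `s`-th coordinate direction. -/
noncomputable def pd {N : ℕ} (f : (Fin N → ℝ) → ℝ) (s : Fin N) (x : Fin N → ℝ) : ℝ :=
  fderiv ℝ f x (Pi.single s 1)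

/-- Coordinate direction on `ℝ^N × ℝ^N` indexed by `Fin N ⊕ Fin N`. -/
noncomputable def dir (N : ℕ) (a : Fin N ⊕ Fin N) : (Fin N → ℝ) × (Fin N → ℝ) :=
  Sum.elim (fun i => (Pi.single i 1, 0)) (fun i => (0, Pi.single i 1)) a

/-- Partial derivative on `ℝ^N × ℝ^N` in the `a`-th coordinate direction. -/
noncomputable def pdT {N : ℕ} (F : (Fin N → ℝ) × (Fin N → ℝ) → ℝ)
    (a : Fin N ⊕ Fin N) (z : (Fin N → ℝ) × (Fin N → ℝ)) : ℝ :=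
  fderiv ℝ F z (dir N a)

/-- `π` is a Poisson tensor on `ℝ^N`: a smooth antisymmetric bivector field
satisfying the Jacobi identity. -/
def IsPoisson {N : ℕ} (π : (Fin N → ℝ) → Matrix (Fin N) (Fin N) ℝ) : Prop :=
  (∀ i j, ContDiff ℝ (⊤ : ℕ∞) fun x => π x i j) ∧
  (∀ x i j, π x j i = - π x i j) ∧
  (∀ x i j k, ∑ s, (π x i s * pd (fun x => π x j k) s x
      + π x j s * pd (fun x => π x k i) s x
      + π x k s * pd (fun x => π x i j) s x) = 0)

/-- `v` is a (smooth) Poisson vector field for `π` (i.e. `L_v π = 0`). -/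
def IsPoissonVF {N : ℕ} (π : (Fin N → ℝ) → Matrix (Fin N) (Fin N) ℝ)
    (v : (Fin N → ℝ) → Fin N → ℝ) : Prop :=
  (∀ i, ContDiff ℝ (⊤ : ℕ∞) fun x => v x i) ∧
  (∀ x i j, ∑ s, (pd (fun x => π x i j) s x * v x s
      - π x s j * pd (fun x => v x i) s x
      - π x i s * pd (fun x => v x j) s x) = 0)

/-- The tangent lift `π_TM` of `π` to `ℝ^N × ℝ^N`. -/
noncomputable def tlift {N : ℕ} (π : (Fin N → ℝ) → Matrix (Fin N) (Fin N) ℝ)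
    (z : (Fin N → ℝ) × (Fin N → ℝ)) : Matrix (Fin N ⊕ Fin N) (Fin N ⊕ Fin N) ℝ :=
  Matrix.of fun a b =>
    match a, b with
    | Sum.inl _, Sum.inl _ => 0
    | Sum.inl i, Sum.inr j => π z.1 i j
    | Sum.inr i, Sum.inl j => π z.1 i j
    | Sum.inr i, Sum.inr j => ∑ s, pd (fun x => π x i j) s z.1 * z.2 s

/-- The complete lift `v_C` of a vector field `v`. -/
noncomputable def liftC {N : ℕ} (v : (Fin N → ℝ) → Fin N → ℝ)
    (z : (Fin N → ℝ) × (Fin N → ℝ)) : Fin N ⊕ Fin N → ℝ :=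
  Sum.elim (fun i => v z.1 i) (fun i => ∑ s, pd (fun x => v x i) s z.1 * z.2 s)

/-- The vertical lift `v_V` of a vector field `v`. -/
def liftV {N : ℕ} (v : (Fin N → ℝ) → Fin N → ℝ)
    (z : (Fin N → ℝ) × (Fin N → ℝ)) : Fin N ⊕ Fin N → ℝ :=
  Sum.elim (fun _ => 0) (fun i => v z.1 i)

/-- The wedge `u ∧ w` of two vector fields, as a bivector field. -/
def wedge {Z ι : Type*} (u w : Z → ι → ℝ) (z : Z) : Matrix ι ι ℝ :=
  Matrix.of fun a b => u z a * w z b - u z b * w z a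

/-- A Poisson tensor on `ℝ^N × ℝ^N`: a smooth antisymmetric bivector field
satisfying the Jacobi identity. -/
def IsPoissonT {N : ℕ}
    (P : (Fin N → ℝ) × (Fin N → ℝ) → Matrix (Fin N ⊕ Fin N) (Fin N ⊕ Fin N) ℝ) : Prop :=
  (∀ a b, ContDiff ℝ (⊤ : ℕ∞) fun z => P z a b) ∧
  (∀ z a b, P z b a = - P z a b) ∧
  (∀ z a b c, ∑ s, (P z a s * pdT (fun z => P z b c) s z
      + P z b s * pdT (fun z => P z c a) s z
      + P z c s * pdT (fun z => P z a b) s z) = 0)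

/-- `c` is a Casimir function for `π` on `ℝ^N`. -/
def IsCasimir {N : ℕ} (π : (Fin N → ℝ) → Matrix (Fin N) (Fin N) ℝ)
    (c : (Fin N → ℝ) → ℝ) : Prop :=
  ContDiff ℝ (⊤ : ℕ∞) c ∧ ∀ x j, ∑ i, pd c i x * π x i j = 0

/-- `F` is a Casimir function for the bivector field `P` on `ℝ^N × ℝ^N`. -/
def IsCasimirT {N : ℕ}
    (P : (Fin N → ℝ) × (Fin N → ℝ) → Matrix (Fin N ⊕ Fin N) (Fin N ⊕ Fin N) ℝ)
    (F : (Fin N → ℝ) × (Fin N → ℝ) → ℝ) : Prop :=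
  ∀ z b, ∑ a, pdT F a z * P z a b = 0

/-- `f ∘ q : ℝ^N × ℝ^N → ℝ`. -/
def fq {N : ℕ} (f : (Fin N → ℝ) → ℝ) (z : (Fin N → ℝ) × (Fin N → ℝ)) : ℝ := f z.1

/-- The fiber-wise linear function `l_{df}` on `ℝ^N × ℝ^N`. -/
noncomputable def ldf {N : ℕ} (f : (Fin N → ℝ) → ℝ) (z : (Fin N → ℝ) × (Fin N → ℝ)) : ℝ :=
  ∑ s, pd f s z.1 * z.2 s

/-- The commutator `[v,w]` of two vector fields on `ℝ^N`. -/
noncomputable def vbr {N : ℕ} (v w : (Fin N → ℝ) → Fin N → ℝ)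
    (x : Fin N → ℝ) (i : Fin N) : ℝ :=
  ∑ s, (v x s * pd (fun x => w x i) s x - w x s * pd (fun x => v x i) s x)

open scoped BigOperators
theorem jacobi_alg {ι : Type*} [Fintype ι]
    (A0 A1 A2 A3 : ι → ℝ) (D0 D1 D2 D3 : ι → ι → ℝ)
    (h01 : ∀ x, ∑ s, A0 s * D1 x s = ∑ s, A1 s * D0 x s)
    (h02 : ∀ x, ∑ s, A0 s * D2 x s = ∑ s, A2 s * D0 x s)
    (h03 : ∀ x, ∑ s, A0 s * D3 x s = ∑ s, A3 s * D0 x s)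
    (h12 : ∀ x, ∑ s, A1 s * D2 x s = ∑ s, A2 s * D1 x s)
    (h13 : ∀ x, ∑ s, A1 s * D3 x s = ∑ s, A3 s * D1 x s)
    (h23 : ∀ x, ∑ s, A2 s * D3 x s = ∑ s, A3 s * D2 x s)
    (a b c : ι) :
    ∑ s, ((A0 a * A1 s - A0 s * A1 a + A2 a * A3 s - A2 s * A3 a) * (D0 b s * A1 c + A0 b * D1 c s - D0 c s * A1 b - A0 c * D1 b s + D2 b s * A3 c + A2 b * D3 c s - D2 c s * A3 b - A2 c * D3 b s)
      + (A0 b * A1 s - A0 s * A1 b + A2 b * A3 s - A2 s * A3 b) * (D0 c s * A1 a + A0 c * D1 a s - D0 a s * A1 c - A0 a * D1 c s + D2 c s * A3 a + A2 c * D3 a s - D2 a s * A3 c - A2 a * D3 c s)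
      + (A0 c * A1 s - A0 s * A1 c + A2 c * A3 s - A2 s * A3 c) * (D0 a s * A1 b + A0 a * D1 b s - D0 b s * A1 a - A0 b * D1 a s + D2 a s * A3 b + A2 a * D3 b s - D2 b s * A3 a - A2 b * D3 a s)) = 0 := by
  have step1 : ∑ s, ((A0 a * A1 s - A0 s * A1 a + A2 a * A3 s - A2 s * A3 a) * (D0 b s * A1 c + A0 b * D1 c s - D0 c s * A1 b - A0 c * D1 b s + D2 b s * A3 c + A2 b * D3 c s - D2 c s * A3 b - A2 c * D3 b s)
      + (A0 b * A1 s - A0 s * A1 b + A2 b * A3 s - A2 s * A3 b) * (D0 c s * A1 a + A0 c * D1 a s - D0 a s * A1 c - A0 a * D1 c s + D2 c s * A3 a + A2 c * D3 a s - D2 a s * A3 c - A2 a * D3 c s)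
      + (A0 c * A1 s - A0 s * A1 c + A2 c * A3 s - A2 s * A3 c) * (D0 a s * A1 b + A0 a * D1 b s - D0 b s * A1 a - A0 b * D1 a s + D2 a s * A3 b + A2 a * D3 b s - D2 b s * A3 a - A2 b * D3 a s))
      =  A0 a * A1 c * (∑ s, A1 s * D0 b s) + A0 a * A0 b * (∑ s, A1 s * D1 c s) - A0 a * A1 b * (∑ s, A1 s * D0 c s) - A0 a * A0 c * (∑ s, A1 s * D1 b s) + A0 a * A3 c * (∑ s, A1 s * D2 b s) + A0 a * A2 b * (∑ s, A1 s * D3 c s) - A0 a * A3 b * (∑ s, A1 s * D2 c s) - A0 a * A2 c * (∑ s, A1 s * D3 b s) - A1 a * A1 c * (∑ s, A0 s * D0 b s) - A1 a * A0 b * (∑ s, A0 s * D1 c s) + A1 a * A1 b * (∑ s, A0 s * D0 c s) + A1 a * A0 c * (∑ s, A0 s * D1 b s) - A1 a * A3 c * (∑ s, A0 s * D2 b s) - A1 a * A2 b * (∑ s, A0 s * D3 c s) + A1 a * A3 b * (∑ s, A0 s * D2 c s) + A1 a * A2 c * (∑ s, A0 s * D3 b s) + A2 a * A1 c * (∑ s,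 A3 s * D0 b s) + A2 a * A0 b * (∑ s, A3 s * D1 c s) - A2 a * A1 b * (∑ s, A3 s * D0 c s) - A2 a * A0 c * (∑ s, A3 s * D1 b s) + A2 a * A3 c * (∑ s, A3 s * D2 b s) + A2 a * A2 b * (∑ s, A3 s * D3 c s) - A2 a * A3 b * (∑ s, A3 s * D2 c s) - A2 a * A2 c * (∑ s, A3 s * D3 b s) - A3 a * A1 c * (∑ s, A2 s * D0 b s) - A3 a * A0 b * (∑ s, A2 s * D1 c s) + A3 a * A1 b * (∑ s, A2 s * D0 c s) + A3 a * A0 c * (∑ s, A2 s * D1 b s) - A3 a * A3 c * (∑ s, A2 s * D2 b s) - A3 a * A2 b * (∑ s, A2 s * D3 c s) + A3 a * A3 b * (∑ s, A2 s * D2 c s) + A3 a * A2 c * (∑ s, A2 s * D3 b s) + A0 b * A1 a * (∑ s, A1 s * D0 c s) + A0 b * A0 c * (∑ s, A1 s * D1 a s) - A0 b * A1 c * (∑ s, A1 s * D0 a s) - A0 b * A0 a * (∑ s, A1 s * D1 c s) + A0 b * A3 a * (∑ s, A1 s * D2 c s) + A0 b * A2 c * (∑ s, A1 s * D3 a s)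 - A0 b * A3 c * (∑ s, A1 s * D2 a s) - A0 b * A2 a * (∑ s, A1 s * D3 c s) - A1 b * A1 a * (∑ s, A0 s * D0 c s) - A1 b * A0 c * (∑ s, A0 s * D1 a s) + A1 b * A1 c * (∑ s, A0 s * D0 a s) + A1 b * A0 a * (∑ s, A0 s * D1 c s) - A1 b * A3 a * (∑ s, A0 s * D2 c s) - A1 b * A2 c * (∑ s, A0 s * D3 a s) + A1 b * A3 c * (∑ s, A0 s * D2 a s) + A1 b * A2 a * (∑ s, A0 s * D3 c s) + A2 b * A1 a * (∑ s, A3 s * D0 c s) + A2 b * A0 c * (∑ s, A3 s * D1 a s) - A2 b * A1 c * (∑ s, A3 s * D0 a s) - A2 b * A0 a * (∑ s, A3 s * D1 c s) + A2 b * A3 a * (∑ s, A3 s * D2 c s) + A2 b * A2 c * (∑ s, A3 s * D3 a s) - A2 b * A3 c * (∑ s, A3 s * D2 a s) - A2 b * A2 a * (∑ s, A3 s * D3 c s) - A3 b * A1 a * (∑ s, A2 s * D0 c s) - A3 b * A0 c * (∑ s, A2 s * D1 a s) + A3 b * A1 c * (∑ s, A2 s * D0 a s) + A3 b * A0 a *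 (∑ s, A2 s * D1 c s) - A3 b * A3 a * (∑ s, A2 s * D2 c s) - A3 b * A2 c * (∑ s, A2 s * D3 a s) + A3 b * A3 c * (∑ s, A2 s * D2 a s) + A3 b * A2 a * (∑ s, A2 s * D3 c s) + A0 c * A1 b * (∑ s, A1 s * D0 a s) + A0 c * A0 a * (∑ s, A1 s * D1 b s) - A0 c * A1 a * (∑ s, A1 s * D0 b s) - A0 c * A0 b * (∑ s, A1 s * D1 a s) + A0 c * A3 b * (∑ s, A1 s * D2 a s) + A0 c * A2 a * (∑ s, A1 s * D3 b s) - A0 c * A3 a * (∑ s, A1 s * D2 b s) - A0 c * A2 b * (∑ s, A1 s * D3 a s) - A1 c * A1 b * (∑ s, A0 s * D0 a s) - A1 c * A0 a * (∑ s, A0 s * D1 b s) + A1 c * A1 a * (∑ s, A0 s * D0 b s) + A1 c * A0 b * (∑ s, A0 s * D1 a s) - A1 c * A3 b * (∑ s, A0 s * D2 a s) - A1 c * A2 a * (∑ s, A0 s * D3 b s) + A1 c * A3 a * (∑ s, A0 s * D2 b s) + A1 c * A2 b * (∑ s, A0 s * D3 a s) + A2 c * A1 b * (∑ s, A3 s *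 D0 a s) + A2 c * A0 a * (∑ s, A3 s * D1 b s) - A2 c * A1 a * (∑ s, A3 s * D0 b s) - A2 c * A0 b * (∑ s, A3 s * D1 a s) + A2 c * A3 b * (∑ s, A3 s * D2 a s) + A2 c * A2 a * (∑ s, A3 s * D3 b s) - A2 c * A3 a * (∑ s, A3 s * D2 b s) - A2 c * A2 b * (∑ s, A3 s * D3 a s) - A3 c * A1 b * (∑ s, A2 s * D0 a s) - A3 c * A0 a * (∑ s, A2 s * D1 b s) + A3 c * A1 a * (∑ s, A2 s * D0 b s) + A3 c * A0 b * (∑ s, A2 s * D1 a s) - A3 c * A3 b * (∑ s, A2 s * D2 a s) - A3 c * A2 a * (∑ s, A2 s * D3 b s) + A3 c * A3 a * (∑ s, A2 s * D2 b s) + A3 c * A2 b * (∑ s, A2 s * D3 a s) := by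
    simp only [Finset.mul_sum, ← Finset.sum_add_distrib, ← Finset.sum_sub_distrib]
    exact Finset.sum_congr rfl fun s _ => by ring
  rw [step1]
  simp only [← h01, ← h02, ← h03, ← h12, ← h13, ← h23]
  ring


section Lemmas
variable {E : Type*} [NormedAddCommGroup E] [NormedSpace ℝ E]

end Lemmas

theorem pdT_eq {N : ℕ} (F : (Fin N → ℝ) × (Fin N → ℝ) → ℝ) (a : Fin N ⊕ Fin N) (z) :
    pdT F a z = fderiv ℝ F z (dir N a) := rfl

variable {N : ℕ}

theorem pdT_sub {F G : (Fin N → ℝ) × (Fin N → ℝ) → ℝ} (hF : Differentiable ℝ F)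
    (hG : Differentiable ℝ G) (a z) :
    pdT (fun z => F z - G z) a z = pdT F a z - pdT G a z := by
  simp only [pdT_eq]; rw [fderiv_fun_sub (hF z) (hG z)]; rfl

theorem pdT_add {F G : (Fin N → ℝ) × (Fin N → ℝ) → ℝ} (hF : Differentiable ℝ F)
    (hG : Differentiable ℝ G) (a z) :
    pdT (fun z => F z + G z) a z = pdT F a z + pdT G a z := by
  simp only [pdT_eq]; rw [fderiv_fun_add (hF z) (hG z)]; rfl

theorem pdT_mul {F G : (Fin N → ℝ) × (Fin N → ℝ) → ℝ} (hF : Differentiable ℝ F)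
    (hG : Differentiable ℝ G) (a z) :
    pdT (fun z => F z * G z) a z = F z * pdT G a z + G z * pdT F a z := by
  simp only [pdT_eq]; rw [fderiv_fun_mul (hF z) (hG z)]; simp [smul_eq_mul]

theorem isPoissonT_of_comm (X0 X1 X2 X3 : (Fin N → ℝ) × (Fin N → ℝ) → (Fin N ⊕ Fin N) → ℝ)
    (hs0 : ∀ a, ContDiff ℝ (⊤ : ℕ∞) fun z => X0 z a) (hs1 : ∀ a, ContDiff ℝ (⊤ : ℕ∞) fun z => X1 z a)
    (hs2 : ∀ a, ContDiff ℝ (⊤ : ℕ∞) fun z => X2 z a) (hs3 : ∀ a, ContDiff ℝ (⊤ : ℕ∞) fun z => X3 z a)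
    (hc01 : ∀ z c, ∑ s, (X0 z s * pdT (fun z => X1 z c) s z - X1 z s * pdT (fun z => X0 z c) s z) = 0)
    (hc02 : ∀ z c, ∑ s, (X0 z s * pdT (fun z => X2 z c) s z - X2 z s * pdT (fun z => X0 z c) s z) = 0)
    (hc03 : ∀ z c, ∑ s, (X0 z s * pdT (fun z => X3 z c) s z - X3 z s * pdT (fun z => X0 z c) s z) = 0)
    (hc12 : ∀ z c, ∑ s, (X1 z s * pdT (fun z => X2 z c) s z - X2 z s * pdT (fun z => X1 z c) s z) = 0)
    (hc13 : ∀ z c, ∑ s, (X1 z s * pdT (fun z => X3 z c) s z - X3 z s * pdT (fun z => X1 z c) s z) = 0)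
    (hc23 : ∀ z c, ∑ s, (X2 z s * pdT (fun z => X3 z c) s z - X3 z s * pdT (fun z => X2 z c) s z) = 0) :
    IsPoissonT (fun z => wedge X0 X1 z + wedge X2 X3 z) := by
  have hd0 : ∀ a, Differentiable ℝ (fun z => X0 z a) := fun a => (hs0 a).differentiable (by simp)
  have hd1 : ∀ a, Differentiable ℝ (fun z => X1 z a) := fun a => (hs1 a).differentiable (by simp)
  have hd2 : ∀ a, Differentiable ℝ (fun z => X2 z a) := fun a => (hs2 a).differentiable (by simp)
  have hd3 : ∀ a, Differentiable ℝ (fun z => X3 z a) := fun a => (hs3 a).differentiable (by simp)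
  have hPval : ∀ z a b, (wedge X0 X1 z + wedge X2 X3 z) a b
      = X0 z a * X1 z b - X0 z b * X1 z a + (X2 z a * X3 z b - X2 z b * X3 z a) := by
    intro z a b; simp [wedge, Matrix.add_apply]
  refine ⟨?_, ?_, ?_⟩
  · intro a b
    simp only [hPval]
    exact (((hs0 a).mul (hs1 b)).sub ((hs0 b).mul (hs1 a))).add
      (((hs2 a).mul (hs3 b)).sub ((hs2 b).mul (hs3 a)))
  · intro z a b; simp only [hPval]; ring
  · intro z a b c
    -- derivative of entries
    have hPdiff : ∀ a b, Differentiable ℝ (fun z => X0 z a * X1 z b - X0 z b * X1 z a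
        + (X2 z a * X3 z b - X2 z b * X3 z a)) := fun a b =>
      (((hd0 a).mul (hd1 b)).sub ((hd0 b).mul (hd1 a))).add
        (((hd2 a).mul (hd3 b)).sub ((hd2 b).mul (hd3 a)))
    have hdP : ∀ b c s, pdT (fun z => (wedge X0 X1 z + wedge X2 X3 z) b c) s z
        = pdT (fun z => X0 z b) s z * X1 z c + X0 z b * pdT (fun z => X1 z c) s z
          - pdT (fun z => X0 z c) s z * X1 z b - X0 z c * pdT (fun z => X1 z b) s z
          + pdT (fun z => X2 z b) s z * X3 z c + X2 z b * pdT (fun z => X3 z c) s z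
          - pdT (fun z => X2 z c) s z * X3 z b - X2 z c * pdT (fun z => X3 z b) s z := by
      intro b c s
      have e1 : (fun z => (wedge X0 X1 z + wedge X2 X3 z) b c)
          = fun z => X0 z b * X1 z c - X0 z c * X1 z b
            + (X2 z b * X3 z c - X2 z c * X3 z b) := by
        funext z; exact hPval z b c
      rw [e1, pdT_add (((hd0 b).fun_mul (hd1 c)).fun_sub ((hd0 c).fun_mul (hd1 b)))
            (((hd2 b).fun_mul (hd3 c)).fun_sub ((hd2 c).fun_mul (hd3 b))),
          pdT_sub ((hd0 b).fun_mul (hd1 c)) ((hd0 c).fun_mul (hd1 b)),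
          pdT_sub ((hd2 b).fun_mul (hd3 c)) ((hd2 c).fun_mul (hd3 b)),
          pdT_mul (hd0 b) (hd1 c), pdT_mul (hd0 c) (hd1 b),
          pdT_mul (hd2 b) (hd3 c), pdT_mul (hd2 c) (hd3 b)]
      ring
    have key := jacobi_alg (fun a => X0 z a) (fun a => X1 z a) (fun a => X2 z a)
      (fun a => X3 z a)
      (fun c s => pdT (fun z => X0 z c) s z) (fun c s => pdT (fun z => X1 z c) s z)
      (fun c s => pdT (fun z => X2 z c) s z) (fun c s => pdT (fun z => X3 z c) s z)
      ?_ ?_ ?_ ?_ ?_ ?_ a b c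
    · rw [← key]
      refine Finset.sum_congr rfl fun s _ => ?_
      beta_reduce
      rw [hdP, hdP, hdP, hPval, hPval, hPval]; ring
    all_goals intro x; rw [← sub_eq_zero, ← Finset.sum_sub_distrib]
    exacts [hc01 z x, hc02 z x, hc03 z x, hc12 z x, hc13 z x, hc23 z x]

section LiftLemmas
variable {N : ℕ}

theorem pd_eq (f : (Fin N → ℝ) → ℝ) (s x) : pd f s x = fderiv ℝ f x (Pi.single s 1) := rfl

theorem pd_smooth {f : (Fin N → ℝ) → ℝ} (hf : ContDiff ℝ (⊤ : ℕ∞) f) (s : Fin N) :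
    ContDiff ℝ (⊤ : ℕ∞) fun x => pd f s x :=
  (hf.fderiv_right (le_refl _)).clm_apply contDiff_const

theorem pd_sub {f g : (Fin N → ℝ) → ℝ} (hf : Differentiable ℝ f) (hg : Differentiable ℝ g)
    (s x) : pd (fun x => f x - g x) s x = pd f s x - pd g s x := by
  simp only [pd_eq]; rw [fderiv_fun_sub (hf x) (hg x)]; rfl

theorem pd_mul {f g : (Fin N → ℝ) → ℝ} (hf : Differentiable ℝ f) (hg : Differentiable ℝ g)
    (s x) : pd (fun x => f x * g x) s x = f x * pd g s x + g x * pd f s x := by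
  simp only [pd_eq]; rw [fderiv_fun_mul (hf x) (hg x)]; simp [smul_eq_mul]

theorem pd_sum {ι : Type*} (t : Finset ι) {f : ι → (Fin N → ℝ) → ℝ}
    (hf : ∀ i, Differentiable ℝ (f i)) (s x) :
    pd (fun x => ∑ i ∈ t, f i x) s x = ∑ i ∈ t, pd (f i) s x := by
  simp only [pd_eq]; rw [fderiv_fun_sum (fun i _ => (hf i x))]; simp

theorem pd_const (c : ℝ) (s : Fin N) (x) : pd (fun _ => c) s x = 0 := by
  simp [pd_eq]

theorem pd_symm {f : (Fin N → ℝ) → ℝ} (hf : ContDiff ℝ (⊤ : ℕ∞) f) (s t : Fin N) (x) :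
    pd (fun x => pd f s x) t x = pd (fun x => pd f t x) s x := by
  have hd : Differentiable ℝ (fderiv ℝ f) :=
    (hf.fderiv_right (m := (⊤ : ℕ∞)) (by simp)).differentiable (by simp)
  have h1 : ∀ a b : Fin N, pd (fun x => pd f a x) b x
      = fderiv ℝ (fderiv ℝ f) x (Pi.single b 1) (Pi.single a 1) := by
    intro a b
    simp only [pd_eq]
    rw [fderiv_clm_apply (hd x) (differentiableAt_const _)]
    simp
  rw [h1, h1]
  have hsymm : IsSymmSndFDerivAt ℝ f x :=
    (hf.contDiffAt).isSymmSndFDerivAt (by rw [minSmoothness_of_isRCLikeNormedField]; exact WithTop.coe_le_coe.mpr (le_top : (2 : ℕ∞) ≤ ⊤))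
  exact hsymm _ _

theorem pdT_sum {ι : Type*} (t : Finset ι) {F : ι → (Fin N → ℝ) × (Fin N → ℝ) → ℝ}
    (hF : ∀ i, Differentiable ℝ (F i)) (a z) :
    pdT (fun z => ∑ i ∈ t, F i z) a z = ∑ i ∈ t, pdT (F i) a z := by
  simp only [pdT_eq]; rw [fderiv_fun_sum (fun i _ => (hF i z))]; simp

theorem pdT_const (c : ℝ) (a : Fin N ⊕ Fin N) (z) : pdT (fun _ => c) a z = 0 := by
  simp [pdT_eq]

theorem fderiv_comp_fst {g : (Fin N → ℝ) → ℝ} (hg : Differentiable ℝ g)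
    (z : (Fin N → ℝ) × (Fin N → ℝ)) :
    fderiv ℝ (fun z : (Fin N → ℝ) × (Fin N → ℝ) => g z.1) z
      = (fderiv ℝ g z.1).comp (ContinuousLinearMap.fst ℝ _ _) := by
  rw [show (fun z : (Fin N → ℝ) × (Fin N → ℝ) => g z.1) = g ∘ Prod.fst from rfl,
    fderiv_comp z (hg z.1) differentiableAt_fst, fderiv_fst]

theorem pdT_fst_inl {g : (Fin N → ℝ) → ℝ} (hg : Differentiable ℝ g) (s : Fin N) (z) :
    pdT (fun z => g z.1) (Sum.inl s) z = pd g s z.1 := by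
  rw [pdT_eq, fderiv_comp_fst hg]
  simp [dir, pd_eq]

theorem pdT_fst_inr {g : (Fin N → ℝ) → ℝ} (hg : Differentiable ℝ g) (s : Fin N) (z) :
    pdT (fun z => g z.1) (Sum.inr s) z = 0 := by
  rw [pdT_eq, fderiv_comp_fst hg]
  simp [dir]

theorem pdT_snd (t : Fin N) (a z) :
    pdT (fun z : (Fin N → ℝ) × (Fin N → ℝ) => z.2 t) a z = (dir N a).2 t := by
  have : (fun z : (Fin N → ℝ) × (Fin N → ℝ) => z.2 t)
      = ((ContinuousLinearMap.proj t).comp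
          (ContinuousLinearMap.snd ℝ (Fin N → ℝ) (Fin N → ℝ))) := rfl
  rw [pdT_eq, this, ContinuousLinearMap.fderiv]
  rfl

theorem contDiff_snd_apply (t : Fin N) :
    ContDiff ℝ (⊤ : ℕ∞) (fun z : (Fin N → ℝ) × (Fin N → ℝ) => z.2 t) :=
  ((ContinuousLinearMap.proj t).comp
    (ContinuousLinearMap.snd ℝ (Fin N → ℝ) (Fin N → ℝ))).contDiff

variable {u w : (Fin N → ℝ) → Fin N → ℝ}

theorem liftC_inl (i : Fin N) : (fun z => liftC u z (Sum.inl i)) = fun z => u z.1 i := rfl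

theorem liftC_inr (i : Fin N) : (fun z => liftC u z (Sum.inr i))
    = fun z => ∑ t, pd (fun x => u x i) t z.1 * z.2 t := rfl

theorem liftV_inl (i : Fin N) : (fun z => liftV u z (Sum.inl i)) = fun _ => (0:ℝ) := rfl

theorem liftV_inr (i : Fin N) : (fun z => liftV u z (Sum.inr i)) = fun z => u z.1 i := rfl

section
variable (hu : ∀ i, ContDiff ℝ (⊤ : ℕ∞) fun x => u x i)
include hu

theorem liftC_smooth : ∀ a, ContDiff ℝ (⊤ : ℕ∞) fun z => liftC u z a := by
  rintro (i | i)
  · rw [liftC_inl]; exact (hu i).comp contDiff_fst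
  · rw [liftC_inr]
    exact ContDiff.sum fun t _ =>
      (((pd_smooth (hu i) t).comp contDiff_fst).mul (contDiff_snd_apply t))

theorem liftV_smooth : ∀ a, ContDiff ℝ (⊤ : ℕ∞) fun z => liftV u z a := by
  rintro (i | i)
  · rw [liftV_inl]; exact contDiff_const
  · rw [liftV_inr]; exact (hu i).comp contDiff_fst


theorem diff_pd_fst (i t : Fin N) :
    Differentiable ℝ (fun z : (Fin N → ℝ) × (Fin N → ℝ) => pd (fun x => u x i) t z.1) :=
  ((pd_smooth (hu i) t).comp contDiff_fst).differentiable (by simp)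

omit hu in
theorem diff_snd_apply' (t : Fin N) :
    Differentiable ℝ (fun z : (Fin N → ℝ) × (Fin N → ℝ) => z.2 t) :=
  (contDiff_snd_apply t).differentiable (by simp)

theorem liftC_inr_summand_diff (i t : Fin N) :
    Differentiable ℝ (fun z : (Fin N → ℝ) × (Fin N → ℝ)
      => pd (fun x => u x i) t z.1 * z.2 t) :=
  ((diff_pd_fst hu i t).mul (diff_snd_apply' t))

theorem pdT_liftC_inr_inl (i s : Fin N) (z) :
    pdT (fun z => liftC u z (Sum.inr i)) (Sum.inl s) z
      = ∑ t, z.2 t * pd (fun x => pd (fun x => u x i) t x) s z.1 := by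
  rw [liftC_inr, pdT_sum _ (fun t => liftC_inr_summand_diff hu i t)]
  refine Finset.sum_congr rfl fun t _ => ?_
  rw [pdT_mul (diff_pd_fst hu i t) (diff_snd_apply' t),
    pdT_fst_inl ((pd_smooth (hu i) t).differentiable (by simp)), pdT_snd]
  simp [dir]

theorem pdT_liftC_inr_inr (i s : Fin N) (z) :
    pdT (fun z => liftC u z (Sum.inr i)) (Sum.inr s) z = pd (fun x => u x i) s z.1 := by
  rw [liftC_inr, pdT_sum _ (fun t => liftC_inr_summand_diff hu i t)]
  have : ∀ t, pdT (fun z : (Fin N → ℝ) × (Fin N → ℝ)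
      => pd (fun x => u x i) t z.1 * z.2 t) (Sum.inr s) z
      = pd (fun x => u x i) t z.1 * (Pi.single s 1 : Fin N → ℝ) t := by
    intro t
    rw [pdT_mul (diff_pd_fst hu i t) (diff_snd_apply' t),
      pdT_fst_inr ((pd_smooth (hu i) t).differentiable (by simp)), pdT_snd]
    simp [dir]
  simp only [this, Pi.single_apply, mul_ite, mul_one, mul_zero]
  simp
end
end LiftLemmas

section Comm
variable {N : ℕ} {u w : (Fin N → ℝ) → Fin N → ℝ}

/-- generic antisymmetry of the commutator expression -/
theorem comm_swap {X Y : (Fin N → ℝ) × (Fin N → ℝ) → (Fin N ⊕ Fin N) → ℝ}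
    (h : ∀ z c, ∑ s, (X z s * pdT (fun z => Y z c) s z
        - Y z s * pdT (fun z => X z c) s z) = 0) :
    ∀ z c, ∑ s, (Y z s * pdT (fun z => X z c) s z
        - X z s * pdT (fun z => Y z c) s z) = 0 := by
  intro z c
  have h2 := h z c
  rw [← neg_eq_zero, ← Finset.sum_neg_distrib] at h2
  rw [← h2]
  exact Finset.sum_congr rfl fun s _ => by ring

variable (hu : ∀ i, ContDiff ℝ (⊤ : ℕ∞) fun x => u x i) (hw : ∀ i, ContDiff ℝ (⊤ : ℕ∞) fun x => w x i)

include hu hw in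
theorem comm_CC (hb : ∀ x i, vbr u w x i = 0) :
    ∀ z c, ∑ s, (liftC u z s * pdT (fun z => liftC w z c) s z
        - liftC w z s * pdT (fun z => liftC u z c) s z) = 0 := by
  have hdu : ∀ i, Differentiable ℝ fun x => u x i := fun i => (hu i).differentiable (by simp)
  have hdw : ∀ i, Differentiable ℝ fun x => w x i := fun i => (hw i).differentiable (by simp)
  rintro z (i | i)
  · rw [Fintype.sum_sum_type]
    have e1 : ∀ s : Fin N, liftC u z (Sum.inl s) * pdT (fun z => liftC w z (Sum.inl i)) (Sum.inl s) z
        - liftC w z (Sum.inl s) * pdT (fun z => liftC u z (Sum.inl i)) (Sum.inl s) z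
        = u z.1 s * pd (fun x => w x i) s z.1 - w z.1 s * pd (fun x => u x i) s z.1 := by
      intro s
      rw [liftC_inl, liftC_inl (u := u), pdT_fst_inl (hdw i), pdT_fst_inl (hdu i)]
      rfl
    have e2 : ∀ s : Fin N, liftC u z (Sum.inr s) * pdT (fun z => liftC w z (Sum.inl i)) (Sum.inr s) z
        - liftC w z (Sum.inr s) * pdT (fun z => liftC u z (Sum.inl i)) (Sum.inr s) z = 0 := by
      intro s
      rw [liftC_inl, liftC_inl (u := u), pdT_fst_inr (hdw i), pdT_fst_inr (hdu i)]
      ring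
    rw [Finset.sum_congr rfl (fun s _ => e1 s), Finset.sum_congr rfl (fun s _ => e2 s)]
    simp only [Finset.sum_const_zero, add_zero]
    exact hb z.1 i
  · rw [Fintype.sum_sum_type]
    have e1 : ∀ s : Fin N, liftC u z (Sum.inl s) * pdT (fun z => liftC w z (Sum.inr i)) (Sum.inl s) z
        - liftC w z (Sum.inl s) * pdT (fun z => liftC u z (Sum.inr i)) (Sum.inl s) z
        = u z.1 s * ∑ t, z.2 t * pd (fun x => pd (fun x => w x i) t x) s z.1
          - w z.1 s * ∑ t, z.2 t * pd (fun x => pd (fun x => u x i) t x) s z.1 := by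
      intro s
      rw [pdT_liftC_inr_inl hw i s, pdT_liftC_inr_inl hu i s]
      rfl
    have e2 : ∀ s : Fin N, liftC u z (Sum.inr s) * pdT (fun z => liftC w z (Sum.inr i)) (Sum.inr s) z
        - liftC w z (Sum.inr s) * pdT (fun z => liftC u z (Sum.inr i)) (Sum.inr s) z
        = (∑ t, pd (fun x => u x s) t z.1 * z.2 t) * pd (fun x => w x i) s z.1
          - (∑ t, pd (fun x => w x s) t z.1 * z.2 t) * pd (fun x => u x i) s z.1 := by
      intro s
      rw [pdT_liftC_inr_inr hw i s, pdT_liftC_inr_inr hu i s]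
      rfl
    rw [Finset.sum_congr rfl (fun s _ => e1 s), Finset.sum_congr rfl (fun s _ => e2 s)]
    -- reorganize into ∑ t, z.2 t * H t
    have main : (∑ s, (u z.1 s * ∑ t, z.2 t * pd (fun x => pd (fun x => w x i) t x) s z.1
          - w z.1 s * ∑ t, z.2 t * pd (fun x => pd (fun x => u x i) t x) s z.1))
        + ∑ s, ((∑ t, pd (fun x => u x s) t z.1 * z.2 t) * pd (fun x => w x i) s z.1
          - (∑ t, pd (fun x => w x s) t z.1 * z.2 t) * pd (fun x => u x i) s z.1)
        = ∑ t, z.2 t * ∑ s, (u z.1 s * pd (fun x => pd (fun x => w x i) t x) s z.1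
            + pd (fun x => u x s) t z.1 * pd (fun x => w x i) s z.1
            - (w z.1 s * pd (fun x => pd (fun x => u x i) t x) s z.1
            + pd (fun x => w x s) t z.1 * pd (fun x => u x i) s z.1)) := by
      simp only [Finset.mul_sum, Finset.sum_mul, ← Finset.sum_add_distrib,
        ← Finset.sum_sub_distrib]
      rw [Finset.sum_comm]
      exact Finset.sum_congr rfl fun s _ => Finset.sum_congr rfl fun t _ => by ring
    rw [main]
    have hvbr : ∀ t, pd (fun x => vbr u w x i) t z.1 = 0 := by
      intro t
      rw [show (fun x => vbr u w x i) = fun _ => (0:ℝ) from funext fun x => hb x i]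
      exact pd_const 0 t z.1
    have hexp : ∀ t x, pd (fun x => vbr u w x i) t x
        = ∑ s, (u x s * pd (fun x => pd (fun x => w x i) s x) t x
            + pd (fun x => w x i) s x * pd (fun x => u x s) t x
            - (w x s * pd (fun x => pd (fun x => u x i) s x) t x
            + pd (fun x => u x i) s x * pd (fun x => w x s) t x)) := by
      intro t x
      have hdsum : ∀ s : Fin N, Differentiable ℝ (fun x =>
          u x s * pd (fun x => w x i) s x - w x s * pd (fun x => u x i) s x) :=
        fun s => ((hdu s).mul ((pd_smooth (hw i) s).differentiable (by simp))).sub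
          ((hdw s).mul ((pd_smooth (hu i) s).differentiable (by simp)))
      rw [show (fun x => vbr u w x i) = fun x => ∑ s, (u x s * pd (fun x => w x i) s x
          - w x s * pd (fun x => u x i) s x) from rfl,
        pd_sum _ hdsum]
      refine Finset.sum_congr rfl fun s _ => ?_
      rw [pd_sub ((hdu s).fun_mul ((pd_smooth (hw i) s).differentiable (by simp)))
            ((hdw s).fun_mul ((pd_smooth (hu i) s).differentiable (by simp))),
        pd_mul (hdu s) ((pd_smooth (hw i) s).differentiable (by simp)),
        pd_mul (hdw s) ((pd_smooth (hu i) s).differentiable (by simp))]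
      try ring
    have hzero : ∀ t : Fin N, ∑ s, (u z.1 s * pd (fun x => pd (fun x => w x i) t x) s z.1
            + pd (fun x => u x s) t z.1 * pd (fun x => w x i) s z.1
            - (w z.1 s * pd (fun x => pd (fun x => u x i) t x) s z.1
            + pd (fun x => w x s) t z.1 * pd (fun x => u x i) s z.1)) = 0 := by
      intro t
      rw [← hvbr t, hexp t z.1]
      refine Finset.sum_congr rfl fun s _ => ?_
      rw [pd_symm (hw i) s t, pd_symm (hu i) s t]
      ring
    simp [hzero]

include hu hw in
theorem comm_CV (hb : ∀ x i, vbr u w x i = 0) :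
    ∀ z c, ∑ s, (liftC u z s * pdT (fun z => liftV w z c) s z
        - liftV w z s * pdT (fun z => liftC u z c) s z) = 0 := by
  have hdu : ∀ i, Differentiable ℝ fun x => u x i := fun i => (hu i).differentiable (by simp)
  have hdw : ∀ i, Differentiable ℝ fun x => w x i := fun i => (hw i).differentiable (by simp)
  rintro z (i | i)
  · rw [Fintype.sum_sum_type]
    have e1 : ∀ s : Fin N, liftC u z (Sum.inl s) * pdT (fun z => liftV w z (Sum.inl i)) (Sum.inl s) z
        - liftV w z (Sum.inl s) * pdT (fun z => liftC u z (Sum.inl i)) (Sum.inl s) z = 0 := by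
      intro s
      rw [liftV_inl (u := w), pdT_const]
      simp [liftV]
    have e2 : ∀ s : Fin N, liftC u z (Sum.inr s) * pdT (fun z => liftV w z (Sum.inl i)) (Sum.inr s) z
        - liftV w z (Sum.inr s) * pdT (fun z => liftC u z (Sum.inl i)) (Sum.inr s) z = 0 := by
      intro s
      rw [liftV_inl (u := w), pdT_const, liftC_inl, pdT_fst_inr (hdu i)]
      simp
    rw [Finset.sum_congr rfl (fun s _ => e1 s), Finset.sum_congr rfl (fun s _ => e2 s)]
    simp
  · rw [Fintype.sum_sum_type]
    have e1 : ∀ s : Fin N, liftC u z (Sum.inl s) * pdT (fun z => liftV w z (Sum.inr i)) (Sum.inl s) z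
        - liftV w z (Sum.inl s) * pdT (fun z => liftC u z (Sum.inr i)) (Sum.inl s) z
        = u z.1 s * pd (fun x => w x i) s z.1 := by
      intro s
      rw [liftV_inr (u := w), pdT_fst_inl (hdw i)]
      simp [liftV, liftC]
    have e2 : ∀ s : Fin N, liftC u z (Sum.inr s) * pdT (fun z => liftV w z (Sum.inr i)) (Sum.inr s) z
        - liftV w z (Sum.inr s) * pdT (fun z => liftC u z (Sum.inr i)) (Sum.inr s) z
        = - (w z.1 s * pd (fun x => u x i) s z.1) := by
      intro s
      rw [liftV_inr (u := w), pdT_fst_inr (hdw i), pdT_liftC_inr_inr hu i s]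
      simp [liftV]
      try ring
    rw [Finset.sum_congr rfl (fun s _ => e1 s), Finset.sum_congr rfl (fun s _ => e2 s)]
    have := hb z.1 i
    unfold vbr at this
    rw [Finset.sum_sub_distrib] at this
    rw [Finset.sum_neg_distrib]
    linarith
end Comm

section Main
variable {N : ℕ} {u w : (Fin N → ℝ) → Fin N → ℝ}

theorem comm_VV (hu : ∀ i, ContDiff ℝ (⊤ : ℕ∞) fun x => u x i)
    (hw : ∀ i, ContDiff ℝ (⊤ : ℕ∞) fun x => w x i) :
    ∀ z c, ∑ s, (liftV u z s * pdT (fun z => liftV w z c) s z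
        - liftV w z s * pdT (fun z => liftV u z c) s z) = 0 := by
  have hdu : ∀ i, Differentiable ℝ fun x => u x i := fun i => (hu i).differentiable (by simp)
  have hdw : ∀ i, Differentiable ℝ fun x => w x i := fun i => (hw i).differentiable (by simp)
  rintro z (i | i)
  · rw [Fintype.sum_sum_type]
    have e1 : ∀ s : Fin N, liftV u z (Sum.inl s) * pdT (fun z => liftV w z (Sum.inl i)) (Sum.inl s) z
        - liftV w z (Sum.inl s) * pdT (fun z => liftV u z (Sum.inl i)) (Sum.inl s) z = 0 := by
      intro s; simp [liftV]
    have e2 : ∀ s : Fin N, liftV u z (Sum.inr s) * pdT (fun z => liftV w z (Sum.inl i)) (Sum.inr s) z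
        - liftV w z (Sum.inr s) * pdT (fun z => liftV u z (Sum.inl i)) (Sum.inr s) z = 0 := by
      intro s
      rw [liftV_inl (u := w), liftV_inl (u := u), pdT_const]
      ring
    rw [Finset.sum_congr rfl (fun s _ => e1 s), Finset.sum_congr rfl (fun s _ => e2 s)]
    simp
  · rw [Fintype.sum_sum_type]
    have e1 : ∀ s : Fin N, liftV u z (Sum.inl s) * pdT (fun z => liftV w z (Sum.inr i)) (Sum.inl s) z
        - liftV w z (Sum.inl s) * pdT (fun z => liftV u z (Sum.inr i)) (Sum.inl s) z = 0 := by
      intro s; simp [liftV]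
    have e2 : ∀ s : Fin N, liftV u z (Sum.inr s) * pdT (fun z => liftV w z (Sum.inr i)) (Sum.inr s) z
        - liftV w z (Sum.inr s) * pdT (fun z => liftV u z (Sum.inr i)) (Sum.inr s) z = 0 := by
      intro s
      rw [liftV_inr (u := w), liftV_inr (u := u), pdT_fst_inr (hdw i), pdT_fst_inr (hdu i)]
      ring
    rw [Finset.sum_congr rfl (fun s _ => e1 s), Finset.sum_congr rfl (fun s _ => e2 s)]
    simp

end Main

/-- if all four vector fields pairwise commute, then both
`v₁_C ∧ v₂_C + v₃_C ∧ v₄_V` and `v₁_C ∧ v₂_C + v₃_C ∧ v₄_C` are Poisson tensors. -/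
theorem sum_wedge_CC_CV_and_CC_CC_is_poisson {N : ℕ}
    (v : Fin 4 → (Fin N → ℝ) → Fin N → ℝ)
    (hs : ∀ k i, ContDiff ℝ (⊤ : ℕ∞) fun x => v k x i)
    (hbr : ∀ k m, ∀ x i, vbr (v k) (v m) x i = 0) :
    IsPoissonT (fun z => wedge (liftC (v 0)) (liftC (v 1)) z
        + wedge (liftC (v 2)) (liftV (v 3)) z) ∧
    IsPoissonT (fun z => wedge (liftC (v 0)) (liftC (v 1)) z
        + wedge (liftC (v 2)) (liftC (v 3)) z) := by
  have hCC := fun k m => comm_CC (hs k) (hs m) (hbr k m)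
  have hCV := fun k m => comm_CV (hs k) (hs m) (hbr k m)
  have hVC := fun k m => comm_swap (hCV m k)
  have hVV := comm_VV (hs 3) (hs 3)
  constructor
  · exact isPoissonT_of_comm (liftC (v 0)) (liftC (v 1)) (liftC (v 2)) (liftV (v 3))
      (liftC_smooth (hs 0)) (liftC_smooth (hs 1)) (liftC_smooth (hs 2)) (liftV_smooth (hs 3))
      (hCC 0 1) (hCC 0 2) (hCV 0 3) (hCC 1 2) (hCV 1 3) (hCV 2 3)
  · exact isPoissonT_of_comm (liftC (v 0)) (liftC (v 1)) (liftC (v 2)) (liftC (v 3))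
      (liftC_smooth (hs 0)) (liftC_smooth (hs 1)) (liftC_smooth (hs 2)) (liftC_smooth (hs 3))
      (hCC 0 1) (hCC 0 2) (hCC 0 3) (hCC 1 2) (hCC 1 3) (hCC 2 3)
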